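/- Let f : ℝ → ℝ be continuous with f = 0 on (-∞,0), and suppose θF(t) ≤ f(t)t for all t > 0 where F(t) = ∫₀ᵗ f and θ > 2. Fix a > 0, V₀ > 0, K > 2 with f(a)/a = V₀/K, and assume t ↦ f(t)/t is increasing on (0,∞). Define f̃(t) = f(t) for t ≤ a and f̃(t) = (V₀/K)t for t > a, and F̃(t) = ∫₀ᵗ f̃. Then for all t > 0: 0 ≤ 2F̃(t) ≤ f̃(t)t ≤ (V₀/K)t². -/

import Mathlib

/-! If `g t / t` is nondecreasing then `g τ ≤ (g t / t) τ` on `[0, t]`, and integrating this linear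
bound gives `2 ∫₀ᵗ g ≤ g t * t`. On `(0, ∞)` the truncation satisfies
`f̃ t / t = min (f t / t) (V₀ / K)`, because `f t / t` crosses the level `V₀ / K` exactly at `a`;
so `f̃ t / t` is again nondecreasing, at most `V₀ / K`, and positive since the
Ambrosetti–Rabinowitz condition forces `f > 0` on `(0, ∞)`. -/

open Set MeasureTheory

theorem two_mul_integral_le_mul_of_monotoneOn_div {g : ℝ → ℝ} {t : ℝ} (ht : 0 < t)
    (hg : IntervalIntegrable g volume 0 t) (hmono : MonotoneOn (fun τ => g τ / τ) (Ioc 0 t)) :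
    2 * ∫ τ in (0:ℝ)..t, g τ ≤ g t * t := by
  have hle : ∀ τ ∈ Ioo 0 t, g τ ≤ g t / t * τ := fun τ hτ =>
    (div_le_iff₀ hτ.1).mp (hmono ⟨hτ.1, hτ.2.le⟩ ⟨ht, le_rfl⟩ hτ.2.le)
  calc 2 * ∫ τ in (0:ℝ)..t, g τ ≤ 2 * ∫ τ in (0:ℝ)..t, g t / t * τ := by
        gcongr
        exact intervalIntegral.integral_mono_on_of_le_Ioo ht.le hg
          ((continuous_const.mul continuous_id).intervalIntegrable 0 t) hle
    _ = g t * t := by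
        rw [intervalIntegral.integral_const_mul, integral_id]
        field_simp
        ring

noncomputable def linearTruncation (f : ℝ → ℝ) (a c : ℝ) : ℝ → ℝ :=
  fun t => if t ≤ a then f t else c * t

section linearTruncation

variable {f : ℝ → ℝ} {a c : ℝ}

theorem continuous_linearTruncation (hf : Continuous f) (hfa : f a = c * a) :
    Continuous (linearTruncation f a c) :=
  Continuous.if_le hf (continuous_const.mul continuous_id) continuous_id continuous_const
    fun t ht => by simp only [ht, hfa]

theorem linearTruncation_div_eq_min (ha : 0 < a) (hfa : f a / a = c)
    (hmono : MonotoneOn (fun t => f t / t) (Ioi 0)) {t : ℝ} (ht : 0 < t) :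
    linearTruncation f a c t / t = min (f t / t) c := by
  unfold linearTruncation
  split_ifs with hta
  · exact (min_eq_left (hfa ▸ hmono ht ha hta)).symm
  · rw [min_eq_right (hfa ▸ hmono ha ht (not_le.mp hta).le), mul_div_cancel_right₀ c ht.ne']

theorem monotoneOn_linearTruncation_div (ha : 0 < a) (hfa : f a / a = c)
    (hmono : MonotoneOn (fun t => f t / t) (Ioi 0)) :
    MonotoneOn (fun t => linearTruncation f a c t / t) (Ioi 0) :=
  fun s hs t ht hst => by
    simp only [linearTruncation_div_eq_min ha hfa hmono hs,
      linearTruncation_div_eq_min ha hfa hmono ht]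
    exact min_le_min_right c (hmono hs ht hst)

end linearTruncation

theorem stmt1_general (f : ℝ → ℝ) (hfc : Continuous f)
    (θ : ℝ)
    (hAR : ∀ t > (0:ℝ), 0 < θ * (∫ τ in (0:ℝ)..t, f τ) ∧
      θ * (∫ τ in (0:ℝ)..t, f τ) ≤ f t * t)
    (a V₀ K : ℝ) (ha : 0 < a)
    (haK : f a / a = V₀ / K)
    (hmono : StrictMonoOn (fun t => f t / t) (Set.Ioi 0))
    (ftil : ℝ → ℝ) (hftil : ftil = fun t => if t ≤ a then f t else V₀/K * t) :
    ∀ t > (0:ℝ),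
      0 ≤ 2 * (∫ τ in (0:ℝ)..t, ftil τ) ∧
      2 * (∫ τ in (0:ℝ)..t, ftil τ) ≤ ftil t * t ∧
      ftil t * t ≤ V₀/K * t^2 := by
  intro t ht
  change ftil = linearTruncation f a (V₀ / K) at hftil
  subst hftil
  have hf_div_pos : ∀ s > (0:ℝ), 0 < f s / s := fun s hs =>
    div_pos (pos_of_mul_pos_left ((hAR s hs).1.trans_le (hAR s hs).2) hs.le) hs
  have hc : 0 < V₀ / K := haK ▸ hf_div_pos a ha
  have htrunc_div := fun s (hs : 0 < s) => linearTruncation_div_eq_min ha haK hmono.monotoneOn hs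
  have hint : IntervalIntegrable (linearTruncation f a (V₀ / K)) volume 0 t :=
    (continuous_linearTruncation hfc ((div_eq_iff ha.ne').mp haK)).intervalIntegrable 0 t
  have htrunc_nonneg : ∀ s ∈ Ioo 0 t, (0:ℝ) ≤ linearTruncation f a (V₀ / K) s := fun s hs =>
    ((div_pos_iff_of_pos_right hs.1).mp (htrunc_div s hs.1 ▸ lt_min (hf_div_pos s hs.1) hc)).le
  refine ⟨?_, two_mul_integral_le_mul_of_monotoneOn_div ht hint
    ((monotoneOn_linearTruncation_div ha haK hmono.monotoneOn).mono Ioc_subset_Ioi_self), ?_⟩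
  · refine mul_nonneg zero_le_two ?_
    simpa using intervalIntegral.integral_mono_on_of_le_Ioo ht.le intervalIntegrable_const hint
      htrunc_nonneg
  · calc linearTruncation f a (V₀ / K) t * t = linearTruncation f a (V₀ / K) t / t * t ^ 2 := by
          field_simp
      _ ≤ V₀ / K * t ^ 2 :=
          mul_le_mul_of_nonneg_right (htrunc_div t ht ▸ min_le_right _ _) (sq_nonneg t)

theorem stmt1 (f : ℝ → ℝ) (hfc : Continuous f) (hfneg : ∀ t < (0:ℝ), f t = 0)
    (θ : ℝ) (hθ : 2 < θ)
    (hAR : ∀ t > (0:ℝ), 0 < θ * (∫ τ in (0:ℝ)..t, f τ) ∧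
      θ * (∫ τ in (0:ℝ)..t, f τ) ≤ f t * t)
    (a V₀ K : ℝ) (ha : 0 < a) (hV₀ : 0 < V₀) (hK : 2 < K)
    (haK : f a / a = V₀ / K)
    (hmono : StrictMonoOn (fun t => f t / t) (Set.Ioi 0))
    (ftil : ℝ → ℝ) (hftil : ftil = fun t => if t ≤ a then f t else V₀/K * t) :
    ∀ t > (0:ℝ),
      0 ≤ 2 * (∫ τ in (0:ℝ)..t, ftil τ) ∧
      2 * (∫ τ in (0:ℝ)..t, ftil τ) ≤ ftil t * t ∧
      ftil t * t ≤ V₀/K * t^2 :=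
  stmt1_general f hfc θ hAR a V₀ K ha haK hmono ftil hftil
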